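/- If the composition operator C_φ is bounded on Lip_0(T), then C_φ is bounded on Lip(T), and consequently φ is a Lipschitz self-map of T. -/

import Mathlib

/-- An infinite, locally finite rooted tree in which every vertex other than
the root has degree greater than 1, together with the parent map. -/
structure LipTree (V : Type*) where
  root : V
  G : SimpleGraph V
  isTree : G.IsTree
  locFin : ∀ v : V, (G.neighborSet v).Finite
  infinite : Infinite V
  deg_gt : ∀ v : V, v ≠ root → 1 < (G.neighborSet v).ncard
  par : V → V
  par_root : par root = root
  adj_par : ∀ v : V, v ≠ root → G.Adj v (par v)
  dist_par : ∀ v : V, v ≠ root → G.dist (par v) root + 1 = G.dist v root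

namespace LipTree

variable {V : Type*}

/-- `|v|`, the distance from `v` to the root. -/
noncomputable def depth (T : LipTree V) (v : V) : ℕ := T.G.dist v T.root

/-- membership in the Lipschitz space `Lip(T)`. -/
def MemLip (T : LipTree V) (f : V → ℂ) : Prop :=
  ∃ C : ℝ, ∀ v : V, v ≠ T.root → ‖f v - f (T.par v)‖ ≤ C

/-- membership in the little Lipschitz space `Lip₀(T)`. -/
def MemLip0 (T : LipTree V) (f : V → ℂ) : Prop :=
  T.MemLip f ∧ ∀ ε : ℝ, 0 < ε → ∃ N : ℕ, ∀ v : V, v ≠ T.root → N ≤ T.depth v →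
    ‖f v - f (T.par v)‖ < ε

/-- the norm `‖f‖_Lip = max {|f(root)|, sup_{v ≠ root} |f(v) - f(v⁻)|}`. -/
noncomputable def normLip (T : LipTree V) (f : V → ℂ) : ℝ :=
  max (‖f T.root‖)
    (sSup {r : ℝ | ∃ v : V, v ≠ T.root ∧ r = ‖f v - f (T.par v)‖})

/-- `φ` is a Lipschitz self-map of the tree. -/
noncomputable def LipschitzSelfMap (T : LipTree V) (φ : V → V) : Prop :=
  ∃ C : ℕ, ∀ v : V, v ≠ T.root → T.G.dist (φ v) (φ (T.par v)) ≤ C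

/-- the Lipschitz number `λ_φ`. -/
noncomputable def lipNum (T : LipTree V) (φ : V → V) : ℝ :=
  sSup {r : ℝ | ∃ v : V, v ≠ T.root ∧ r = (T.G.dist (φ v) (φ (T.par v)) : ℝ)}

/-- the composition operator `C_φ` maps `Lip₀` into itself and is bounded there. -/
def BoundedOnLip0 (T : LipTree V) (φ : V → V) : Prop :=
  (∀ f : V → ℂ, T.MemLip0 f → T.MemLip0 (f ∘ φ)) ∧
  ∃ C : ℝ, ∀ f : V → ℂ, T.MemLip0 f → T.normLip (f ∘ φ) ≤ C * T.normLip f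

/-- `u` belongs to the sector `S_v` determined by `v`. -/
def InSector (T : LipTree V) (v u : V) : Prop := ∃ k : ℕ, T.par^[k] u = v

end LipTree

/-
Cut `f ∈ Lip(T)` off at level `N`: keep `f` up to depth `N` and extend it below that level
constantly along each branch. The truncation lies in `Lip₀(T)`, its norm is at most `‖f‖_Lip`,
and it agrees with `f` wherever the depth is at most `N`. Every quantity entering
`‖f ∘ φ‖_Lip` involves only two values of `f`, so it is already controlled by the norm of
`C_φ` applied to a suitable truncation. Testing the resulting bound on
`u ↦ d(w, u) - d(w, o)` with `w = φ v⁻`, a function of norm at most `1`, bounds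
`d(φ v, φ v⁻)` by the norm of `C_φ`.
-/

theorem SimpleGraph.Adj.abs_dist_sub_dist_le_one {V : Type*} {G : SimpleGraph V} {a b : V}
    (hab : G.Adj a b) (w : V) : |(G.dist w b : ℝ) - G.dist w a| ≤ 1 := by
  have hnat : G.dist w b ≤ G.dist w a + 1 ∧ G.dist w a ≤ G.dist w b + 1 := by
    rcases hab.diff_dist_adj (u := w) with h | h | h <;> omega
  have hb : (G.dist w b : ℝ) ≤ G.dist w a + 1 := by exact_mod_cast hnat.1
  have ha : (G.dist w a : ℝ) ≤ G.dist w b + 1 := by exact_mod_cast hnat.2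
  rw [abs_le]
  constructor <;> linarith

namespace LipTree

variable {V : Type*} (T : LipTree V)

lemma depth_par {v : V} (hv : v ≠ T.root) : T.depth (T.par v) + 1 = T.depth v :=
  T.dist_par v hv

lemma depth_root : T.depth T.root = 0 := SimpleGraph.dist_self

lemma normLip_nonneg (f : V → ℂ) : 0 ≤ T.normLip f :=
  (norm_nonneg _).trans (le_max_left _ _)

lemma norm_root_le_normLip (f : V → ℂ) : ‖f T.root‖ ≤ T.normLip f :=
  le_max_left _ _

lemma norm_sub_par_le_normLip {f : V → ℂ} (hf : T.MemLip f) {v : V} (hv : v ≠ T.root) :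
    ‖f v - f (T.par v)‖ ≤ T.normLip f := by
  obtain ⟨C, hC⟩ := hf
  have hbdd : BddAbove {r : ℝ | ∃ u : V, u ≠ T.root ∧ r = ‖f u - f (T.par u)‖} := by
    refine ⟨C, ?_⟩
    rintro r ⟨u, hu, rfl⟩
    exact hC u hu
  exact (le_csSup hbdd ⟨v, hv, rfl⟩).trans (le_max_right _ _)

lemma normLip_le {f : V → ℂ} {M : ℝ} (hroot : ‖f T.root‖ ≤ M)
    (hpar : ∀ v : V, v ≠ T.root → ‖f v - f (T.par v)‖ ≤ M) : T.normLip f ≤ M := by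
  refine max_le hroot (Real.sSup_le ?_ ((norm_nonneg _).trans hroot))
  rintro r ⟨v, hv, rfl⟩
  exact hpar v hv

/-- The value of `f` at the ancestor of `u` of depth `N`, or at `u` itself when `|u| ≤ N`
(the subtraction truncates to `0`). -/
noncomputable def truncate (f : V → ℂ) (N : ℕ) (u : V) : ℂ :=
  f (T.par^[T.depth u - N] u)

variable {T}

lemma truncate_of_depth_le {f : V → ℂ} {N : ℕ} {u : V} (h : T.depth u ≤ N) :
    T.truncate f N u = f u := by
  simp [truncate, Nat.sub_eq_zero_of_le h]

lemma truncate_par_of_lt {f : V → ℂ} {N : ℕ} {u : V} (hu : u ≠ T.root) (h : N < T.depth u) :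
    T.truncate f N (T.par u) = T.truncate f N u := by
  have hd := T.depth_par hu
  rw [truncate, truncate, show T.depth u - N = (T.depth (T.par u) - N) + 1 by omega,
    Function.iterate_succ_apply]

lemma norm_truncate_sub_par_le {f : V → ℂ} (hf : T.MemLip f) (N : ℕ) {v : V}
    (hv : v ≠ T.root) : ‖T.truncate f N v - T.truncate f N (T.par v)‖ ≤ T.normLip f := by
  rcases le_or_gt (T.depth v) N with hle | hlt
  · have hd := T.depth_par hv
    rw [truncate_of_depth_le hle, truncate_of_depth_le (by omega)]
    exact T.norm_sub_par_le_normLip hf hv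
  · rw [truncate_par_of_lt hv hlt, sub_self, norm_zero]
    exact T.normLip_nonneg f

lemma memLip0_truncate {f : V → ℂ} (hf : T.MemLip f) (N : ℕ) : T.MemLip0 (T.truncate f N) := by
  refine ⟨⟨_, fun _ hv => norm_truncate_sub_par_le hf N hv⟩, fun ε hε => ⟨N + 1, ?_⟩⟩
  intro v hv hdepth
  rwa [truncate_par_of_lt hv (by omega), sub_self, norm_zero]

lemma normLip_truncate_le {f : V → ℂ} (hf : T.MemLip f) (N : ℕ) :
    T.normLip (T.truncate f N) ≤ T.normLip f := by
  refine T.normLip_le ?_ fun _ hv => norm_truncate_sub_par_le hf N hv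
  rw [truncate_of_depth_le (by simp [depth_root])]
  exact T.norm_root_le_normLip f

variable {φ : V → V}

theorem BoundedOnLip0.exists_norm_comp_le (h : T.BoundedOnLip0 φ) :
    ∃ C : ℝ, 0 ≤ C ∧ ∀ f : V → ℂ, T.MemLip f →
      ‖f (φ T.root)‖ ≤ C * T.normLip f ∧
      ∀ v : V, v ≠ T.root → ‖f (φ v) - f (φ (T.par v))‖ ≤ C * T.normLip f := by
  obtain ⟨hmap, C, hC⟩ := h
  refine ⟨max C 0, le_max_right _ _, fun f hf => ?_⟩
  have hbound (N : ℕ) : T.normLip (T.truncate f N ∘ φ) ≤ max C 0 * T.normLip f :=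
    calc T.normLip (T.truncate f N ∘ φ) ≤ C * T.normLip (T.truncate f N) :=
          hC _ (memLip0_truncate hf N)
      _ ≤ max C 0 * T.normLip f :=
          mul_le_mul (le_max_left _ _) (normLip_truncate_le hf N) (T.normLip_nonneg _)
            (le_max_right _ _)
  constructor
  · have hroot := T.norm_root_le_normLip (T.truncate f (T.depth (φ T.root)) ∘ φ)
    rw [Function.comp_apply, truncate_of_depth_le le_rfl] at hroot
    exact hroot.trans (hbound _)
  · intro v hv
    set N := max (T.depth (φ v)) (T.depth (φ (T.par v)))
    have hdiff := T.norm_sub_par_le_normLip (hmap _ (memLip0_truncate hf N)).1 hv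
    rw [Function.comp_apply, Function.comp_apply, truncate_of_depth_le (le_max_left _ _),
      truncate_of_depth_le (le_max_right _ _)] at hdiff
    exact hdiff.trans (hbound N)

variable (T)

noncomputable def distFrom (w u : V) : ℂ :=
  (((T.G.dist w u : ℝ) - T.G.dist w T.root : ℝ) : ℂ)

lemma norm_distFrom_sub (w a b : V) :
    ‖T.distFrom w a - T.distFrom w b‖ = |(T.G.dist w a : ℝ) - T.G.dist w b| := by
  rw [distFrom, distFrom, ← Complex.ofReal_sub, Complex.norm_real, Real.norm_eq_abs]
  ring_nf

lemma norm_distFrom_sub_par_le_one (w : V) {u : V} (hu : u ≠ T.root) :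
    ‖T.distFrom w u - T.distFrom w (T.par u)‖ ≤ 1 := by
  rw [norm_distFrom_sub]
  exact (T.adj_par u hu).symm.abs_dist_sub_dist_le_one w

lemma memLip_distFrom (w : V) : T.MemLip (T.distFrom w) :=
  ⟨1, fun _ hu => T.norm_distFrom_sub_par_le_one w hu⟩

lemma normLip_distFrom_le_one (w : V) : T.normLip (T.distFrom w) ≤ 1 :=
  T.normLip_le (by simp [distFrom]) fun _ hu => T.norm_distFrom_sub_par_le_one w hu

variable {T}

theorem lipschitzSelfMap_of_norm_comp_sub_par_le {C : ℝ} (hC0 : 0 ≤ C)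
    (hC : ∀ f : V → ℂ, T.MemLip f → ∀ v : V, v ≠ T.root →
      ‖f (φ v) - f (φ (T.par v))‖ ≤ C * T.normLip f) :
    T.LipschitzSelfMap φ := by
  refine ⟨⌈C⌉₊, fun v hv => Nat.cast_le (α := ℝ).mp ?_⟩
  have hdist := hC _ (T.memLip_distFrom (φ (T.par v))) v hv
  rw [norm_distFrom_sub, SimpleGraph.dist_self, Nat.cast_zero, sub_zero,
    abs_of_nonneg (Nat.cast_nonneg _), SimpleGraph.dist_comm] at hdist
  calc (T.G.dist (φ v) (φ (T.par v)) : ℝ) ≤ C * T.normLip (T.distFrom (φ (T.par v))) := hdist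
    _ ≤ C := mul_le_of_le_one_right hC0 (T.normLip_distFrom_le_one _)
    _ ≤ ⌈C⌉₊ := Nat.le_ceil C

end LipTree

/-- If `C_φ` is bounded on `Lip₀(T)` then `C_φ` is bounded on `Lip(T)`; consequently `φ`
is a Lipschitz self-map of `T`. -/
theorem bounded_on_lip_of_bounded_on_lip0 {V : Type*} (T : LipTree V) (φ : V → V)
    (h : T.BoundedOnLip0 φ) :
    (∀ f : V → ℂ, T.MemLip f → T.MemLip (f ∘ φ)) ∧
    (∃ C : ℝ, ∀ f : V → ℂ, T.MemLip f → T.normLip (f ∘ φ) ≤ C * T.normLip f) ∧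
    T.LipschitzSelfMap φ := by
  obtain ⟨C, hC0, hC⟩ := h.exists_norm_comp_le
  refine ⟨fun f hf => ⟨_, (hC f hf).2⟩, ⟨C, fun f hf => T.normLip_le (hC f hf).1 (hC f hf).2⟩,
    LipTree.lipschitzSelfMap_of_norm_comp_sub_par_le hC0 fun f hf => (hC f hf).2⟩
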